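/- For partitions λ, μ, define t̄_λ = −(s−s⁻¹)v·Σ_{cells∈λ} s^{−2(content)} + δ. Then the map λ ↦ t̄_λ is injective on partitions (the scalars t̄_λ are pairwise distinct for distinct Young diagrams). -/

import Mathlib

noncomputable section

abbrev F : Type := FractionRing (MvPolynomial (Fin 2) ℚ)

def s : F := algebraMap (MvPolynomial (Fin 2) ℚ) F (MvPolynomial.X 0)
def v : F := algebraMap (MvPolynomial (Fin 2) ℚ) F (MvPolynomial.X 1)

def δ : F := (v⁻¹ - v) / (s - s⁻¹)

/-- `t̄_λ = −(s−s⁻¹) v Σ_{cells∈λ} s^{−2·content} + δ`. -/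
def tbar (γ : YoungDiagram) : F :=
  -((s - s⁻¹) * v * (∑ c ∈ γ.cells, s ^ (-2 * ((c.2 : ℤ) - (c.1 : ℤ))))) + δ

/-
Write `q = s⁻²`. Since `s - s⁻¹ ≠ 0` and `v ≠ 0`, `t̄_λ` determines `∑_{c ∈ λ} q^{content c}`, the
value at `q` of the content generating function of `λ`, a Laurent polynomial whose coefficient of
`T^k` is the number of cells of `λ` on the diagonal `j - i = k`. As `s` is transcendental over `ℚ`,
so is `q`, and evaluation at `q` is injective on `ℚ[T;T⁻¹]`. Finally, a Young diagram is determined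
by the lengths of its diagonals: the cells on each diagonal form an initial segment of it.
-/

open LaurentPolynomial Finset

theorem Finset.eq_range_card_of_isLowerSet {S : Finset ℕ} (hS : IsLowerSet (S : Set ℕ)) :
    S = range #S := by
  obtain hS | ⟨a, hS⟩ := hS.eq_univ_or_Iio
  · exact absurd (hS ▸ S.finite_toSet) Set.infinite_univ
  · have hSa : S = range a := by rw [← coe_inj, hS, coe_range]
    rw [hSa, card_range]

namespace LaurentPolynomial

theorem coeff_sum_T {R ι : Type*} [Semiring R] (S : Finset ι) (e : ι → ℤ) (n : ℤ) :
    (∑ i ∈ S, (T (e i) : R[T;T⁻¹])).coeff n = #{i ∈ S | e i = n} := by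
  simp only [T, AddMonoidAlgebra.coeff_sum, AddMonoidAlgebra.coeff_single, Finsupp.finsetSum_apply,
    Finsupp.single_apply, sum_boole]

theorem eval₂_injective_of_transcendental {R S : Type*} [CommRing R] [CommRing S] [Algebra R S]
    {x : Sˣ} (hx : Transcendental R (x : S)) : Function.Injective (eval₂ (algebraMap R S) x) := by
  refine (injective_iff_map_eq_zero _).2 fun f hf => ?_
  obtain ⟨n, p, hp⟩ := exists_T_pow f
  have hp0 : Polynomial.aeval (x : S) p = 0 := by
    rw [Polynomial.aeval_def, ← eval₂_toLaurent, hp, map_mul, hf, zero_mul]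
  rwa [transcendental_iff.1 hx p hp0, map_zero, eq_comm, (isUnit_T n).mul_left_eq_zero] at hp

end LaurentPolynomial

namespace YoungDiagram

def content (c : ℕ × ℕ) : ℤ := c.2 - c.1

def diagCount (γ : YoungDiagram) (k : ℤ) : ℕ := #{c ∈ γ.cells | content c = k}

def diagonal (γ : YoungDiagram) (k : ℤ) : Finset ℕ :=
  {c ∈ γ.cells | content c = k}.image fun c => min c.1 c.2

theorem card_diagonal (γ : YoungDiagram) (k : ℤ) : #(γ.diagonal k) = γ.diagCount k := by
  refine card_image_of_injOn fun a ha b hb hab => ?_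
  simp only [mem_coe, mem_filter] at ha hb
  simp only [content] at ha hb
  ext <;> omega

theorem isLowerSet_diagonal (γ : YoungDiagram) (k : ℤ) : IsLowerSet (γ.diagonal k : Set ℕ) := by
  rintro m n hnm hm
  simp only [diagonal, coe_image, coe_filter, Set.mem_image, Set.mem_ofPred_eq] at hm ⊢
  obtain ⟨⟨i, j⟩, ⟨hij, rfl⟩, rfl⟩ := hm
  refine ⟨(i - (min i j - n), j - (min i j - n)), ⟨γ.up_left_mem (by omega) (by omega) hij, ?_⟩, ?_⟩
  all_goals simp only [content]; omega

theorem mem_iff_min_mem_diagonal (γ : YoungDiagram) (i j : ℕ) :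
    (i, j) ∈ γ ↔ min i j ∈ γ.diagonal (content (i, j)) := by
  simp only [diagonal, mem_image, mem_filter, mem_cells]
  refine ⟨fun h => ⟨(i, j), ⟨h, rfl⟩, rfl⟩, ?_⟩
  rintro ⟨⟨i', j'⟩, ⟨h, hk⟩, hmin⟩
  simp only [content] at hk hmin
  obtain ⟨rfl, rfl⟩ : i' = i ∧ j' = j := by omega
  exact h

theorem mem_iff_min_lt_diagCount (γ : YoungDiagram) (i j : ℕ) :
    (i, j) ∈ γ ↔ min i j < γ.diagCount (content (i, j)) := by
  rw [mem_iff_min_mem_diagonal, eq_range_card_of_isLowerSet (γ.isLowerSet_diagonal _), mem_range,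
    card_diagonal]

theorem ext_of_diagCount {γ μ : YoungDiagram} (h : ∀ k, γ.diagCount k = μ.diagCount k) :
    γ = μ := by
  ext ⟨i, j⟩
  simp only [mem_cells, mem_iff_min_lt_diagCount, h]

def contentGenFun (R : Type*) [Semiring R] (γ : YoungDiagram) : R[T;T⁻¹] :=
  ∑ c ∈ γ.cells, T (content c)

theorem coeff_contentGenFun {R : Type*} [Semiring R] (γ : YoungDiagram) (k : ℤ) :
    (contentGenFun R γ).coeff k = γ.diagCount k :=
  coeff_sum_T _ _ _

theorem contentGenFun_injective (R : Type*) [Semiring R] [CharZero R] :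
    Function.Injective (contentGenFun R) := fun γ μ h =>
  ext_of_diagCount fun k => by
    simpa only [coeff_contentGenFun, Nat.cast_inj] using congrArg (fun p => p.coeff k) h

theorem eval₂_contentGenFun {R S : Type*} [CommSemiring R] [CommSemiring S] (f : R →+* S)
    (x : Sˣ) (γ : YoungDiagram) :
    eval₂ f x (contentGenFun R γ) = ∑ c ∈ γ.cells, ((x ^ content c : Sˣ) : S) := by
  simp [contentGenFun, map_sum]

end YoungDiagram

open YoungDiagram

theorem transcendental_s : Transcendental ℚ s :=
  (transcendental_algebraMap_iff (IsFractionRing.injective (MvPolynomial (Fin 2) ℚ) F)).2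
    (MvPolynomial.transcendental_X ℚ 0)

theorem v_ne_zero : v ≠ 0 :=
  (map_ne_zero_iff _ (IsFractionRing.injective (MvPolynomial (Fin 2) ℚ) F)).2
    (MvPolynomial.X_ne_zero 1)

theorem s_ne_zero : s ≠ 0 := fun h => transcendental_s (h ▸ isAlgebraic_zero)

theorem s_sub_inv_ne_zero : s - s⁻¹ ≠ 0 := by
  intro h
  have hs2 : s ^ 2 = 1 := by
    rw [sq]
    nth_rewrite 2 [sub_eq_zero.1 h]
    exact mul_inv_cancel₀ s_ne_zero
  exact transcendental_s (IsAlgebraic.of_pow two_pos (hs2 ▸ isAlgebraic_one))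

def q : Fˣ := Units.mk0 s s_ne_zero ^ (-2 : ℤ)

theorem transcendental_q : Transcendental ℚ (q : F) := by
  rw [q, Units.val_zpow_eq_zpow_val, Units.val_mk0, zpow_neg, zpow_ofNat, Transcendental,
    IsAlgebraic.inv_iff]
  exact transcendental_s.pow two_pos

theorem sum_cells_eq_eval₂_contentGenFun (γ : YoungDiagram) :
    ∑ c ∈ γ.cells, s ^ (-2 * ((c.2 : ℤ) - (c.1 : ℤ))) =
      eval₂ (algebraMap ℚ F) q (contentGenFun ℚ γ) := by
  simp only [eval₂_contentGenFun, q, ← zpow_mul, Units.val_zpow_eq_zpow_val, Units.val_mk0, content]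

theorem tbar_injective : Function.Injective tbar := by
  intro γ μ h
  have hsum := mul_left_cancel₀ (mul_ne_zero s_sub_inv_ne_zero v_ne_zero)
    (neg_injective (add_right_cancel h))
  rw [sum_cells_eq_eval₂_contentGenFun, sum_cells_eq_eval₂_contentGenFun] at hsum
  exact contentGenFun_injective ℚ (eval₂_injective_of_transcendental transcendental_q hsum)
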